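/- Let Cn > 0, ρ1, ρ2 > 0 and p∞ ∈ ℝ, and set β = (ρ1−ρ2)/(ρ1+ρ2). Define φ(s) = tanh(s/(√2·Cn)), p(s) = p∞·(1 + β·φ(s)), and μ = −p∞·β. Then for every s ∈ ℝ one has ρ̂(φ(s)) > 0 and the pair (φ, p, μ) solves the stationary planar-interface system: (i) p'(s) − (p(s)/ρ̂(φ(s)))·((ρ1−ρ2)/2)·φ'(s) = 0, and (ii) μ − (1/Cn)·f'(φ(s)) + Cn·φ''(s) + (p(s)/ρ̂(φ(s)))·((ρ1−ρ2)/2) = 0, where (ρ1−ρ2)/2 = dρ̂/dφ. -/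

import Mathlib

/-!
Since `ρ̂(φ) = (ρ1 + ρ2)/2 · (1 + βφ)`, the quotient `p/ρ̂(φ)` is the constant `2 p∞/(ρ1 + ρ2)`,
so the coupling term `(p/ρ̂) · dρ̂/dφ` equals `p∞ β = -μ`. Equation (i) then reduces to
`p' = p∞ β φ'`, and equation (ii) to the profile equation `Cn² φ'' = φ³ - φ`, which
`tanh (s/(√2 Cn))` solves; this profile stays in `(-1, 1)`, where `f'(φ) = φ³ - φ`.
-/

/-- The truncated double-well potential. -/
noncomputable def doubleWell (φ : ℝ) : ℝ :=
  if φ < -1 then (φ + 1) ^ 2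
  else if φ ≤ 1 then (1 / 4) * (φ ^ 2 - 1) ^ 2
  else (φ - 1) ^ 2

/-- Mixture density `ρ̂(φ) = ρ1·(1+φ)/2 + ρ2·(1−φ)/2`. -/
noncomputable def mixDensity (ρ1 ρ2 φ : ℝ) : ℝ := ρ1 * (1 + φ) / 2 + ρ2 * (1 - φ) / 2

open Real Set

theorem Real.hasDerivAt_tanh (x : ℝ) : HasDerivAt tanh (1 - tanh x ^ 2) x := by
  have hcosh := (cosh_pos x).ne'
  rw [show tanh = fun y => sinh y / cosh y from funext tanh_eq_sinh_div_cosh]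
  refine ((hasDerivAt_sinh x).div (hasDerivAt_cosh x) hcosh).congr_deriv ?_
  field_simp

theorem hasDerivAt_tanh_div (a s : ℝ) :
    HasDerivAt (fun t => tanh (t / a)) ((1 - tanh (s / a) ^ 2) / a) s := by
  rw [div_eq_mul_one_div _ a]
  exact (hasDerivAt_tanh (s / a)).comp s ((hasDerivAt_id' s).div_const a)

theorem deriv_deriv_tanh_div (a s : ℝ) :
    deriv (deriv fun t => tanh (t / a)) s = 2 / a ^ 2 * (tanh (s / a) ^ 3 - tanh (s / a)) := by
  have hderiv : deriv (fun t => tanh (t / a)) = fun t => (1 - tanh (t / a) ^ 2) / a :=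
    funext fun t => (hasDerivAt_tanh_div a t).deriv
  rw [hderiv, ((((hasDerivAt_tanh_div a s).fun_pow 2).const_sub 1).div_const a).deriv]
  ring

theorem deriv_doubleWell_of_mem_Ioo {φ : ℝ} (hφ : φ ∈ Ioo (-1) 1) :
    deriv doubleWell φ = φ ^ 3 - φ := by
  have hlocal : doubleWell =ᶠ[nhds φ] fun z => 1 / 4 * (z ^ 2 - 1) ^ 2 := by
    filter_upwards [Ioo_mem_nhds hφ.1 hφ.2] with z hz
    simp only [doubleWell, if_neg (not_lt.2 hz.1.le), if_pos hz.2.le]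
  rw [hlocal.deriv_eq, ((((hasDerivAt_pow 2 φ).sub_const 1).fun_pow 2).const_mul (1 / 4)).deriv]
  ring

theorem mixDensity_pos {ρ1 ρ2 φ : ℝ} (hρ1 : 0 < ρ1) (hρ2 : 0 < ρ2) (hφ : φ ∈ Icc (-1) 1) :
    0 < mixDensity ρ1 ρ2 φ := by
  unfold mixDensity
  obtain ⟨hlo, hhi⟩ := hφ
  rcases le_total φ 0 with hsign | hsign <;> nlinarith

theorem mixDensity_eq_mul {ρ1 ρ2 : ℝ} (hρ : ρ1 + ρ2 ≠ 0) (φ : ℝ) :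
    mixDensity ρ1 ρ2 φ = (ρ1 + ρ2) / 2 * (1 + (ρ1 - ρ2) / (ρ1 + ρ2) * φ) := by
  unfold mixDensity
  field_simp
  ring

theorem pressure_div_mixDensity_mul {ρ1 ρ2 φ : ℝ} (hρ : ρ1 + ρ2 ≠ 0)
    (hmix : mixDensity ρ1 ρ2 φ ≠ 0) (pinf : ℝ) :
    pinf * (1 + (ρ1 - ρ2) / (ρ1 + ρ2) * φ) / mixDensity ρ1 ρ2 φ * ((ρ1 - ρ2) / 2) =
      pinf * ((ρ1 - ρ2) / (ρ1 + ρ2)) := by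
  rw [mixDensity_eq_mul hρ] at hmix ⊢
  rw [mul_div_mul_right _ _ (right_ne_zero_of_mul hmix)]
  field_simp

/-- The profile `φ(s) = tanh(s/(√2·Cn))`, pressure `p(s) = pinf·(1 + β·φ(s))` with
`β = (ρ1−ρ2)/(ρ1+ρ2)`, and chemical potential `μ = −pinf·β` solve the stationary
planar-interface system of the quasi-incompressible NSCH model, and `ρ̂(φ(s)) > 0`. -/
theorem stationary_interface_solution (Cn ρ1 ρ2 pinf : ℝ)
    (hCn : 0 < Cn) (hρ1 : 0 < ρ1) (hρ2 : 0 < ρ2) :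
    let β : ℝ := (ρ1 - ρ2) / (ρ1 + ρ2)
    let φ : ℝ → ℝ := fun s => Real.tanh (s / (Real.sqrt 2 * Cn))
    let p : ℝ → ℝ := fun s => pinf * (1 + β * φ s)
    let μ : ℝ := -pinf * β
    ∀ s : ℝ,
      0 < mixDensity ρ1 ρ2 (φ s) ∧
      deriv p s - (p s / mixDensity ρ1 ρ2 (φ s)) * ((ρ1 - ρ2) / 2) * deriv φ s = 0 ∧
      μ - (1 / Cn) * deriv doubleWell (φ s) + Cn * deriv (deriv φ) s +
        (p s / mixDensity ρ1 ρ2 (φ s)) * ((ρ1 - ρ2) / 2) = 0 := by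
  intro β φ p μ s
  have hφ : φ s ∈ Ioo (-1) 1 := ⟨neg_one_lt_tanh _, tanh_lt_one _⟩
  have hmix : 0 < mixDensity ρ1 ρ2 (φ s) := mixDensity_pos hρ1 hρ2 (Ioo_subset_Icc_self hφ)
  have hcoupling : p s / mixDensity ρ1 ρ2 (φ s) * ((ρ1 - ρ2) / 2) = pinf * β :=
    pressure_div_mixDensity_mul (by positivity) hmix.ne' pinf
  refine ⟨hmix, ?_, ?_⟩
  · have hφ' := hasDerivAt_tanh_div (√2 * Cn) s
    rw [hcoupling, (((hφ'.const_mul β).const_add 1).const_mul pinf).deriv, hφ'.deriv]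
    ring
  · rw [hcoupling, deriv_doubleWell_of_mem_Ioo hφ, deriv_deriv_tanh_div, mul_pow,
      sq_sqrt zero_le_two]
    simp only [μ, φ]
    field_simp
    ring
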